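/- arXiv:2604.25511 — 5 statements merged into one kernel-verified Lean document; each statement's English description precedes it below -/
import Mathlib

section
/- Let $\mathcal{A}$ be a symmetric monoidal closed abelian category and let $(\mathcal{T}, \mathcal{F})$ be a torsion pair in $\mathcal{A}$. Then the following are equivalent: (i) $[T, F] = 0$ for all $T \in \mathcal{T}$ and $F \in \mathcal{F}$; (ii) $\mathcal{T}$ is a tensor ideal (i.e., $T \otimes M \in \mathcal{T}$ for all $T \in \mathcal{T}$, $M \in \mathcal{A}$); (iii) $\mathcal{F}$ is a Hom ideal (i.e., $[M, F] \in \mathcal{F}$ for all $F \in \mathcal{F}$, $M \in \mathcal{A}$). -/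
open CategoryTheory CategoryTheory.MonoidalCategory CategoryTheory.Limits

universe v u

/-- Let `C` be a symmetric monoidal closed abelian category and `(𝒯, ℱ)` a
torsion pair in `C` (both classes closed under isomorphisms, `Hom(𝒯, ℱ) = 0`, and every
object sits in a short exact sequence with torsion subobject and torsion-free quotient).
Then the following are equivalent:
(i) the internal Hom `[T, F]` is zero for all `T ∈ 𝒯`, `F ∈ ℱ`;
(ii) `𝒯` is a tensor ideal;
(iii) `ℱ` is a Hom ideal. -/
theorem statement2 {C : Type u} [Category.{v} C] [Abelian C] [MonoidalCategory C]
    [SymmetricCategory C] [MonoidalClosed C]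
    (𝒯 ℱ : Set C)
    (h𝒯iso : ∀ X Y : C, Nonempty (X ≅ Y) → X ∈ 𝒯 → Y ∈ 𝒯)
    (hℱiso : ∀ X Y : C, Nonempty (X ≅ Y) → X ∈ ℱ → Y ∈ ℱ)
    (hhom : ∀ T ∈ 𝒯, ∀ F ∈ ℱ, ∀ f : T ⟶ F, f = 0)
    (hdecomp : ∀ M : C, ∃ (T F : C) (_ : T ∈ 𝒯) (_ : F ∈ ℱ)
      (f : T ⟶ M) (g : M ⟶ F) (w : f ≫ g = 0),
      (ShortComplex.mk f g w).ShortExact) :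
    ((∀ T ∈ 𝒯, ∀ F ∈ ℱ, IsZero ((ihom T).obj F)) ↔
        (∀ T ∈ 𝒯, ∀ M : C, T ⊗ M ∈ 𝒯)) ∧
    ((∀ T ∈ 𝒯, ∀ M : C, T ⊗ M ∈ 𝒯) ↔
        (∀ F ∈ ℱ, ∀ M : C, (ihom M).obj F ∈ ℱ)) := by
  -- characterization of 𝒯 and ℱ via orthogonality
  have mem𝒯 : ∀ M : C, (∀ F ∈ ℱ, ∀ f : M ⟶ F, f = 0) → M ∈ 𝒯 := by
    intro M hM
    obtain ⟨T, F, hT, hF, f, g, w, se⟩ := hdecomp M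
    have hg : g = 0 := hM F hF g
    haveI : Epi ((ShortComplex.mk f g w).f) := se.exact.epi_f hg
    haveI := se.mono_f
    haveI : IsIso ((ShortComplex.mk f g w).f) := isIso_of_mono_of_epi _
    exact h𝒯iso T M ⟨asIso ((ShortComplex.mk f g w).f)⟩ hT
  have memℱ : ∀ M : C, (∀ T ∈ 𝒯, ∀ f : T ⟶ M, f = 0) → M ∈ ℱ := by
    intro M hM
    obtain ⟨T, F, hT, hF, f, g, w, se⟩ := hdecomp M
    have hf : f = 0 := hM T hT f
    haveI : Mono ((ShortComplex.mk f g w).g) := se.exact.mono_g hf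
    haveI := se.epi_g
    haveI : IsIso ((ShortComplex.mk f g w).g) := isIso_of_mono_of_epi _
    exact hℱiso F M ⟨(asIso ((ShortComplex.mk f g w).g)).symm⟩ hF
  -- (i) → (ii)
  have h12 : (∀ T ∈ 𝒯, ∀ F ∈ ℱ, IsZero ((ihom T).obj F)) →
      (∀ T ∈ 𝒯, ∀ M : C, T ⊗ M ∈ 𝒯) := by
    intro h T hT M
    apply mem𝒯
    intro F hF f
    have hz := h T hT F hF
    have e := ((ihom.adjunction T).homEquiv M F)
    have : Subsingleton (T ⊗ M ⟶ F) := by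
      constructor
      intro a b
      have := hz.eq_of_tgt (e a) (e b)
      simpa using e.injective this
    exact Subsingleton.elim f 0
  -- (ii) → (i)
  have h21 : (∀ T ∈ 𝒯, ∀ M : C, T ⊗ M ∈ 𝒯) →
      (∀ T ∈ 𝒯, ∀ F ∈ ℱ, IsZero ((ihom T).obj F)) := by
    intro h T hT F hF
    rw [IsZero.iff_id_eq_zero]
    have e := ((ihom.adjunction T).homEquiv ((ihom T).obj F) F)
    have key : ∀ a b : ((ihom T).obj F ⟶ (ihom T).obj F), a = b := by
      intro a b
      have : e.symm a = e.symm b :=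
        (hhom _ (h T hT ((ihom T).obj F)) F hF (e.symm a)).trans
          (hhom _ (h T hT ((ihom T).obj F)) F hF (e.symm b)).symm
      simpa using e.symm.injective this
    exact key _ _
  -- (ii) → (iii)
  have h23 : (∀ T ∈ 𝒯, ∀ M : C, T ⊗ M ∈ 𝒯) →
      (∀ F ∈ ℱ, ∀ M : C, (ihom M).obj F ∈ ℱ) := by
    intro h F hF M
    apply memℱ
    intro T hT f
    have e := ((ihom.adjunction M).homEquiv T F)
    have hMT : M ⊗ T ∈ 𝒯 := h𝒯iso (T ⊗ M) (M ⊗ T) ⟨β_ T M⟩ (h T hT M)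
    have : e.symm f = e.symm 0 :=
      (hhom _ hMT F hF (e.symm f)).trans (hhom _ hMT F hF (e.symm 0)).symm
    simpa using e.symm.injective this
  -- (iii) → (ii)
  have h32 : (∀ F ∈ ℱ, ∀ M : C, (ihom M).obj F ∈ ℱ) →
      (∀ T ∈ 𝒯, ∀ M : C, T ⊗ M ∈ 𝒯) := by
    intro h T hT M
    apply mem𝒯
    intro F hF f
    have e := ((ihom.adjunction M).homEquiv T F)
    have hf' : (β_ M T).inv ≫ (β_ M T).hom ≫ f = (β_ M T).inv ≫ (β_ M T).hom ≫ 0 := by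
      congr 1
      have : e ((β_ M T).hom ≫ f) = e ((β_ M T).hom ≫ 0) :=
        (hhom T hT _ (h F hF M) _).trans (hhom T hT _ (h F hF M) _).symm
      exact e.injective this
    simpa using hf'
  exact ⟨⟨h12, h21⟩, ⟨fun h => h23 h, fun h => h32 h⟩⟩
end

section
/- Let $R$ be a commutative noetherian ring. A full subcategory of the category of finitely generated $R$-modules closed under isomorphisms is a torsion class (closed under quotients and extensions) if and only if it is a Serre subcategory (closed under submodules, quotients, and extensions). -/
universe u

variable {R : Type u} [CommRing R]

/-- A predicate on (finitely generated) `R`-modules, i.e. a subcategory of `mod R` closed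
under isomorphisms. -/
abbrev ModClass (R : Type u) [CommRing R] : Type (u + 1) :=
  ∀ (M : Type u) [AddCommGroup M] [Module R M], Prop

/-- The class `P` is closed under isomorphisms (among finitely generated modules). -/
def IsoClosed (P : ModClass R) : Prop :=
  ∀ (M N : Type u) [AddCommGroup M] [Module R M] [AddCommGroup N] [Module R N],
    Module.Finite R M → (M ≃ₗ[R] N) → P M → P N

/-- The class `P` is closed under quotients (among finitely generated modules). -/
def QuotClosed (P : ModClass R) : Prop :=
  ∀ (M N : Type u) [AddCommGroup M] [Module R M] [AddCommGroup N] [Module R N],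
    Module.Finite R M → Module.Finite R N →
    ∀ f : M →ₗ[R] N, Function.Surjective f → P M → P N

/-- The class `P` is closed under submodules (among finitely generated modules). -/
def SubClosed (P : ModClass R) : Prop :=
  ∀ (M : Type u) [AddCommGroup M] [Module R M],
    Module.Finite R M → P M → ∀ N : Submodule R M, P N

/-- The class `P` is closed under extensions (among finitely generated modules): if
`0 → A → B → C → 0` is exact with `A, C ∈ P` then `B ∈ P`. -/
def ExtClosed (P : ModClass R) : Prop :=
  ∀ (A B C : Type u) [AddCommGroup A] [Module R A] [AddCommGroup B] [Module R B]
    [AddCommGroup C] [Module R C],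
    Module.Finite R A → Module.Finite R B → Module.Finite R C →
    ∀ (f : A →ₗ[R] B) (g : B →ₗ[R] C), Function.Injective f → Function.Surjective g →
      LinearMap.range f = LinearMap.ker g → P A → P C → P B

/-! If a class `P` closed under quotients and extensions contains `M`, then it contains `R ⧸ p`
for every `p ∈ Supp M`. By noetherian induction on `p`: a nonzero map `M → R ⧸ p` has as image
a nonzero ideal `I` of `R ⧸ p` lying in `P`, while `(R ⧸ p) ⧸ I` is supported strictly above
`p` and so lies in `P` by dévissage along a prime filtration; the extension
`0 → I → R ⧸ p → (R ⧸ p) ⧸ I → 0` then gives `R ⧸ p ∈ P`. A submodule `N ≤ M` has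
`Supp N ⊆ Supp M`, so dévissage puts `N` in `P` as well. -/

open Module Submodule

section

variable {C : Type*} [AddCommGroup C] [Module R C] {p : Ideal R} [hp : p.IsPrime]

theorem eq_zero_of_smul_eq_zero_of_notMem (hann : annihilator R C ≤ p)
    (hC : ∀ c : C, c ≠ 0 → ∃ s ∉ p, ∀ y : C, s • y ∈ R ∙ c)
    {u : R} (hu : u ∉ p) {c : C} (h : u • c = 0) : c = 0 := by
  by_contra hc
  obtain ⟨s, hs, hsc⟩ := hC c hc
  have hus : u * s ∈ annihilator R C := mem_annihilator.mpr fun y => by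
    obtain ⟨r, hr⟩ := mem_span_singleton.mp (hsc y)
    rw [mul_smul, ← hr, smul_comm, h, smul_zero]
  exact (hp.mem_or_mem (hann hus)).elim hu hs

theorem exists_linearMap_quotient_apply_ne_zero (hpC : p ≤ annihilator R C)
    (hann : annihilator R C ≤ p) (hC : ∀ c : C, c ≠ 0 → ∃ s ∉ p, ∀ y : C, s • y ∈ R ∙ c)
    {x : C} (hx : x ≠ 0) : ∃ f : C →ₗ[R] R ⧸ p, f x ≠ 0 := by
  obtain ⟨s, hs, hsx⟩ := hC x hx
  have hker : LinearMap.ker (LinearMap.toSpanSingleton R C x) = p := by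
    ext r
    refine ⟨fun h => not_not.mp fun hr => hx (eq_zero_of_smul_eq_zero_of_notMem hann hC hr h),
      fun hr => mem_annihilator.mp (hpC hr) x⟩
  let e : (R ⧸ p) ≃ₗ[R] R ∙ x :=
    (quotEquivOfEq _ _ hker.symm).trans ((LinearMap.toSpanSingleton R C x).quotKerEquivRange.trans
      (LinearEquiv.ofEq _ _ (LinearMap.span_singleton_eq_range R C x).symm))
  refine ⟨e.symm.toLinearMap ∘ₗ (s • LinearMap.id).codRestrict (R ∙ x) hsx, fun h => ?_⟩
  rw [LinearMap.comp_apply, LinearEquiv.coe_coe, LinearEquiv.map_eq_zero_iff] at h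
  have : s • x = 0 := by simpa using congrArg Subtype.val h
  exact hx (eq_zero_of_smul_eq_zero_of_notMem hann hC hs this)

end

theorem exists_linearMap_quotient_apply_ne_zero_of_mem_support
    {M : Type*} [AddCommGroup M] [Module R M] [IsNoetherian R M] {p : PrimeSpectrum R}
    (hp : p ∈ support R M) : ∃ (f : M →ₗ[R] R ⧸ p.asIdeal) (m : M), f m ≠ 0 := by
  have hpM : annihilator R (M ⧸ (p.asIdeal • ⊤ : Submodule R M)) ≤ p.asIdeal :=
    annihilator_le_of_mem_support (by
      rw [support_quotient]; exact ⟨hp, (PrimeSpectrum.mem_zeroLocus _ _).mpr subset_rfl⟩)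
  -- For `G` maximal with `M ⧸ G` an `R ⧸ p`-module supported at `p`, each nonzero `c : M ⧸ G`
  -- generates `M ⧸ G` up to some `s ∉ p`, which makes `M ⧸ G` embed into `R ⧸ p`.
  obtain ⟨G, ⟨hpG, hG⟩, hGmax⟩ := set_has_maximal_iff_noetherian.mpr inferInstance
    {G : Submodule R M | p.asIdeal • ⊤ ≤ G ∧ annihilator R (M ⧸ G) ≤ p.asIdeal}
    ⟨_, le_rfl, hpM⟩
  have hpC : p.asIdeal ≤ annihilator R (M ⧸ G) := fun r hr => mem_annihilator.mpr fun y => by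
    obtain ⟨m, rfl⟩ := G.mkQ_surjective y
    rw [← map_smul, mkQ_apply, Quotient.mk_eq_zero]
    exact hpG (smul_mem_smul hr mem_top)
  have hC (c : M ⧸ G) (hc : c ≠ 0) : ∃ s ∉ p.asIdeal, ∀ y, s • y ∈ R ∙ c := by
    obtain ⟨m, rfl⟩ := G.mkQ_surjective c
    set G' := (R ∙ G.mkQ m).comap G.mkQ
    have hlt : G < G' :=
      lt_of_le_of_ne (fun y hy => by simp [G', (Quotient.mk_eq_zero G).mpr hy])
        fun h => hc (by rw [mkQ_apply, Quotient.mk_eq_zero, h]; exact mem_span_singleton_self _)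
    have hann : ¬ annihilator R (M ⧸ G') ≤ p.asIdeal :=
      fun h => hGmax _ ⟨hpG.trans hlt.le, h⟩ hlt
    obtain ⟨s, hs, hsp⟩ := SetLike.not_le_iff_exists.mp hann
    refine ⟨s, hsp, fun y => ?_⟩
    obtain ⟨m', rfl⟩ := G.mkQ_surjective y
    have := mem_annihilator.mp hs (Submodule.Quotient.mk (p := G') m')
    rw [← Quotient.mk_smul, Quotient.mk_eq_zero] at this
    exact this
  obtain ⟨m, hm⟩ : ∃ m, m ∉ G := by
    by_contra! h
    have : Subsingleton (M ⧸ G) := Submodule.Quotient.subsingleton_iff.mpr (eq_top_iff'.mpr h)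
    rw [(Module.annihilator_eq_top_iff (R := R)).mpr this, top_le_iff] at hG
    exact p.isPrime.ne_top hG
  obtain ⟨f, hf⟩ := exists_linearMap_quotient_apply_ne_zero hpC hG hC
    (x := G.mkQ m) (by simpa using hm)
  exact ⟨f ∘ₗ G.mkQ, m, hf⟩

theorem lt_asIdeal_of_mem_support_quotient {p : Ideal R} [p.IsPrime] {I : Submodule R (R ⧸ p)}
    (hI : I ≠ ⊥) {q : PrimeSpectrum R} (hq : q ∈ support R ((R ⧸ p) ⧸ I)) : p < q.asIdeal := by
  have hann := annihilator_le_of_mem_support hq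
  have hp : p ≤ annihilator R ((R ⧸ p) ⧸ I) := Ideal.annihilator_quotient.ge.trans
    (LinearMap.annihilator_le_of_surjective _ I.mkQ_surjective)
  obtain ⟨y, hyI, hy⟩ := exists_mem_ne_zero_of_ne_bot hI
  obtain ⟨r, rfl⟩ := Ideal.Quotient.mk_surjective y
  have hr : r ∈ annihilator R ((R ⧸ p) ⧸ I) := mem_annihilator.mpr fun z => by
    obtain ⟨a, rfl⟩ := I.mkQ_surjective z
    obtain ⟨a, rfl⟩ := Ideal.Quotient.mk_surjective a
    have hra : r • Ideal.Quotient.mk p a = a • Ideal.Quotient.mk p r := by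
      rw [Algebra.smul_def, Algebra.smul_def, Ideal.Quotient.algebraMap_eq, mul_comm]
    rw [← map_smul, mkQ_apply, Quotient.mk_eq_zero, hra]
    exact I.smul_mem a hyI
  exact lt_of_le_of_ne (hp.trans hann) fun h =>
    hy (Ideal.Quotient.eq_zero_iff_mem.mpr (h ▸ hann hr))

section ClosureProperties

variable {P : ModClass R}

theorem QuotClosed.of_subsingleton (hQ : QuotClosed P) {M : Type u} [AddCommGroup M] [Module R M]
    [Module.Finite R M] (hM : P M) (Z : Type u) [AddCommGroup Z] [Module R Z] [Subsingleton Z] :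
    P Z :=
  hQ M Z ‹_› inferInstance 0 (Function.surjective_to_subsingleton _) hM

theorem ExtClosed.of_forall_mem_support [IsNoetherianRing R] (hE : ExtClosed P)
    (hiso : IsoClosed P)
    (h0 : ∀ (Z : Type u) [AddCommGroup Z] [Module R Z] [Subsingleton Z], P Z)
    (N : Type u) [AddCommGroup N] [Module R N] [hN : Module.Finite R N]
    (h : ∀ q ∈ support R N, P (R ⧸ q.asIdeal)) : P N := by
  induction hN using IsNoetherianRing.induction_on_isQuotientEquivQuotientPrime with
  | subsingleton N => exact h0 N
  | quotient N q e =>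
    exact hiso _ N inferInstance e.symm (h q (by simp [e.support_eq, support_of_algebra]))
  | exact N₁ N₂ N₃ f g hf hg hfg h₁ h₃ =>
    rw [support_of_exact hfg hf hg] at h
    exact hE N₁ N₂ N₃ ‹_› ‹_› ‹_› f g hf hg (LinearMap.exact_iff.mp hfg).symm
      (h₁ fun q hq => h q (.inl hq)) (h₃ fun q hq => h q (.inr hq))

theorem quotient_mem_of_mem_support [IsNoetherianRing R] (hiso : IsoClosed P) (hQ : QuotClosed P)
    (hE : ExtClosed P) {M : Type u} [AddCommGroup M] [Module R M] [Module.Finite R M] (hM : P M)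
    (p : PrimeSpectrum R) (hp : p ∈ support R M) : P (R ⧸ p.asIdeal) := by
  have : WellFoundedGT (PrimeSpectrum R) := ⟨wellFounded_gt.onFun (f := PrimeSpectrum.asIdeal)⟩
  induction p using WellFoundedGT.induction with
  | _ p IH =>
  obtain ⟨f, m, hf⟩ := exists_linearMap_quotient_apply_ne_zero_of_mem_support hp
  have hI : P (LinearMap.range f) :=
    hQ M _ ‹_› inferInstance f.rangeRestrict f.surjective_rangeRestrict hM
  have hquot : P ((R ⧸ p.asIdeal) ⧸ LinearMap.range f) := by
    refine hE.of_forall_mem_support hiso (fun Z _ _ _ => hQ.of_subsingleton hM Z) _ fun q hq => ?_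
    have hpq := lt_asIdeal_of_mem_support_quotient (I := LinearMap.range f)
      (fun h => hf (by simpa [h] using LinearMap.mem_range_self f m)) hq
    exact IH q hpq (mem_support_mono hpq.le hp)
  exact hE _ _ _ inferInstance inferInstance inferInstance _ _ (injective_subtype _)
    (mkQ_surjective _) (by rw [range_subtype, ker_mkQ]) hI hquot

end ClosureProperties

/-- Let `R` be a commutative noetherian ring.  A full subcategory of the
category of finitely generated `R`-modules closed under isomorphisms is a torsion class
(closed under quotients and extensions) if and only if it is a Serre subcategory (closed
under submodules, quotients and extensions). -/
theorem statement5 {R : Type u} [CommRing R] [IsNoetherianRing R]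
    (P : ModClass R) (hiso : IsoClosed P) :
    (QuotClosed P ∧ ExtClosed P) ↔ (SubClosed P ∧ QuotClosed P ∧ ExtClosed P) := by
  refine ⟨fun ⟨hQ, hE⟩ => ⟨fun M _ _ _ hM N => ?_, hQ, hE⟩, fun ⟨_, hQ, hE⟩ => ⟨hQ, hE⟩⟩
  refine hE.of_forall_mem_support hiso (fun Z _ _ _ => hQ.of_subsingleton hM Z) N fun q hq => ?_
  exact quotient_mem_of_mem_support hiso hQ hE hM q
    (support_subset_of_injective N.subtype N.injective_subtype hq)
end

section
/- Let $Q$ be a finite acyclic quiver and $R$ a commutative ring. An $R$-linear representation $D = (\{D_i\}, \{D_a\})$ of $Q$ is dualizable with respect to the pointwise tensor product if and only if each $D_i$ is a finitely generated projective $R$-module and each map $D_a: D_i \to D_j$ (for an arrow $a: i \to j$) is an isomorphism. -/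
open scoped TensorProduct

universe u v w

section Aux

variable {R : Type u} [CommRing R]

/-- From the first triangle identity: any finite representation of `η 1` gives a dual basis. -/
theorem aux_triangle1 {M N : Type u} [AddCommGroup M] [AddCommGroup N]
    [Module R M] [Module R N]
    (η : R →ₗ[R] M ⊗[R] N) (ε : N ⊗[R] M →ₗ[R] R)
    (ht : (TensorProduct.rid R M).toLinearMap ∘ₗ LinearMap.lTensor M ε ∘ₗ
      (TensorProduct.assoc R M N M).toLinearMap ∘ₗ LinearMap.rTensor M η ∘ₗ
      (TensorProduct.lid R M).symm.toLinearMap = LinearMap.id)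
    {ι : Type*} (t : Finset ι) (u : ι → M) (v : ι → N)
    (hη1 : η 1 = ∑ k ∈ t, u k ⊗ₜ[R] v k) (x : M) :
    ∑ k ∈ t, ε (v k ⊗ₜ[R] x) • u k = x := by
  have h := LinearMap.congr_fun ht x
  simpa only [LinearMap.comp_apply, LinearEquiv.coe_coe, TensorProduct.lid_symm_apply,
    LinearMap.rTensor_tmul, hη1, TensorProduct.sum_tmul, map_sum, TensorProduct.assoc_tmul,
    LinearMap.lTensor_tmul, TensorProduct.rid_tmul, LinearMap.id_apply] using h

theorem aux_dual_apply {M : Type u} [AddCommGroup M] [Module R M]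
    {n : ℕ} (d : Fin n → M) (f : Fin n → (M →ₗ[R] R))
    (hdf : ∀ x, ∑ k, f k x • d k = x) (g : M →ₗ[R] R) :
    ∑ k, g (d k) • f k = g := by
  ext x
  have h : g (∑ k, f k x • d k) = g x := by rw [hdf]
  rw [map_sum] at h
  simp only [map_smul, smul_eq_mul] at h
  simp only [LinearMap.coe_sum, Finset.sum_apply, LinearMap.smul_apply, smul_eq_mul]
  rw [← h]
  exact Finset.sum_congr rfl fun k _ => mul_comm _ _

theorem aux_dual_sum_eq {M : Type u} [AddCommGroup M] [Module R M]
    {n m : ℕ} (d : Fin n → M) (f : Fin n → (M →ₗ[R] R))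
    (u : Fin m → M) (v : Fin m → (M →ₗ[R] R))
    (hdf : ∀ x, ∑ k, f k x • d k = x) (huv : ∀ x, ∑ l, v l x • u l = x) :
    ∑ k, d k ⊗ₜ[R] f k = ∑ l, u l ⊗ₜ[R] v l := by
  calc ∑ k, d k ⊗ₜ[R] f k
      = ∑ k, ∑ l, u l ⊗ₜ[R] (v l (d k) • f k) := by
        refine Finset.sum_congr rfl fun k _ => ?_
        conv_lhs => rw [← huv (d k)]
        rw [TensorProduct.sum_tmul]
        exact Finset.sum_congr rfl fun l _ => TensorProduct.smul_tmul _ _ _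
    _ = ∑ l, u l ⊗ₜ[R] (∑ k, v l (d k) • f k) := by
        rw [Finset.sum_comm]
        exact Finset.sum_congr rfl fun l _ => (TensorProduct.tmul_sum _ _ _).symm
    _ = ∑ l, u l ⊗ₜ[R] v l := by
        refine Finset.sum_congr rfl fun l _ => ?_
        rw [aux_dual_apply d f hdf (v l)]

theorem aux_exists_dualBasis {M : Type u} [AddCommGroup M] [Module R M]
    [Module.Finite R M] [Module.Projective R M] :
    ∃ (n : ℕ) (d : Fin n → M) (f : Fin n → (M →ₗ[R] R)),
      ∀ x, ∑ k, f k x • d k = x := by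
  obtain ⟨n, s, hs⟩ := Module.Finite.exists_fin (R := R) (M := M)
  let π : (Fin n → R) →ₗ[R] M :=
    { toFun := fun w => ∑ k, w k • s k
      map_add' := by intro w w'; simp [add_smul, Finset.sum_add_distrib]
      map_smul' := by intro c w; simp [mul_smul, Finset.smul_sum] }
  have hπ : Function.Surjective π := by
    intro x
    have hx : x ∈ Submodule.span R (Set.range s) := hs ▸ Submodule.mem_top
    obtain ⟨c, hc⟩ := (Submodule.mem_span_range_iff_exists_fun R).1 hx
    exact ⟨c, hc⟩
  obtain ⟨σ, hσ⟩ := Module.projective_lifting_property π LinearMap.id hπ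
  refine ⟨n, s, fun k => (LinearMap.proj k).comp σ, fun x => ?_⟩
  have : π (σ x) = x := LinearMap.congr_fun hσ x
  simpa [π] using this

end Aux

/-- An `R`-linear representation of a quiver `V`: an `R`-module at each vertex and an
`R`-linear map along each arrow. -/
structure QuiverRep (R : Type u) [CommRing R] (V : Type v) [Quiver.{w} V] where
  M : V → Type u
  [addCommGroup : ∀ i, AddCommGroup (M i)]
  [module : ∀ i, Module R (M i)]
  map : ∀ {i j : V}, (i ⟶ j) → (M i →ₗ[R] M j)

attribute [instance] QuiverRep.addCommGroup QuiverRep.module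

/-- Let `Q` be a finite acyclic quiver and `R` a commutative ring.  An
`R`-linear representation `D` of `Q` is dualizable with respect to the pointwise tensor
product (i.e. there exist a representation `E` and morphisms of representations
`η : 𝟙 ⟶ D ⊗ E` and `ε : E ⊗ D ⟶ 𝟙` — here given componentwise, with the naturality
squares over each arrow — satisfying the triangle identities) if and only if each `D_i` is a
finitely generated projective `R`-module and each structure map `D_a` is an isomorphism. -/
theorem statement9 {R : Type u} [CommRing R] {V : Type v} [Quiver.{w} V]
    [Finite V] [∀ i j : V, Finite (i ⟶ j)]
    (hacyclic : ∀ (i : V) (p : Quiver.Path i i), p = Quiver.Path.nil)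
    (D : QuiverRep R V) :
    (∃ (E : QuiverRep R V)
        (η : ∀ i : V, R →ₗ[R] TensorProduct R (D.M i) (E.M i))
        (ε : ∀ i : V, TensorProduct R (E.M i) (D.M i) →ₗ[R] R),
      -- `η` is a morphism of representations `𝟙 ⟶ D ⊗ E`
      (∀ (i j : V) (a : i ⟶ j),
        (TensorProduct.map (D.map a) (E.map a)).comp (η i) = η j) ∧
      -- `ε` is a morphism of representations `E ⊗ D ⟶ 𝟙`
      (∀ (i j : V) (a : i ⟶ j),
        (ε j).comp (TensorProduct.map (E.map a) (D.map a)) = ε i) ∧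
      -- first triangle identity (componentwise)
      (∀ i : V,
        (TensorProduct.rid R (D.M i)).toLinearMap ∘ₗ
          LinearMap.lTensor (D.M i) (ε i) ∘ₗ
          (TensorProduct.assoc R (D.M i) (E.M i) (D.M i)).toLinearMap ∘ₗ
          LinearMap.rTensor (D.M i) (η i) ∘ₗ
          (TensorProduct.lid R (D.M i)).symm.toLinearMap = LinearMap.id) ∧
      -- second triangle identity (componentwise)
      (∀ i : V,
        (TensorProduct.lid R (E.M i)).toLinearMap ∘ₗ
          LinearMap.rTensor (E.M i) (ε i) ∘ₗ
          (TensorProduct.assoc R (E.M i) (D.M i) (E.M i)).symm.toLinearMap ∘ₗ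
          LinearMap.lTensor (E.M i) (η i) ∘ₗ
          (TensorProduct.rid R (E.M i)).symm.toLinearMap = LinearMap.id)) ↔
    ((∀ i : V, Module.Finite R (D.M i) ∧ Module.Projective R (D.M i)) ∧
      ∀ (i j : V) (a : i ⟶ j), Function.Bijective (D.map a)) := by
  constructor
  · rintro ⟨E, η, ε, hη, hε, ht1, ht2⟩
    classical
    have dual : ∀ i : V, ∃ S : Finset (D.M i × E.M i),
        η i 1 = ∑ p ∈ S, p.1 ⊗ₜ[R] p.2 := fun i => by
      obtain ⟨S, hS⟩ := TensorProduct.exists_finset (η i 1); exact ⟨S, hS⟩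
    choose S hS using dual
    have hdb : ∀ (i : V) (x : D.M i), ∑ p ∈ S i, ε i (p.2 ⊗ₜ[R] x) • p.1 = x := fun i =>
      aux_triangle1 (η i) (ε i) (ht1 i) (S i) Prod.fst Prod.snd (hS i)
    refine ⟨fun i => ⟨?_, ?_⟩, ?_⟩
    · -- finite
      refine ⟨⟨(S i).image Prod.fst, ?_⟩⟩
      rw [eq_top_iff]
      intro x _
      rw [← hdb i x]
      refine Submodule.sum_mem _ fun p hp => Submodule.smul_mem _ _ ?_
      exact Submodule.subset_span (by simpa using Finset.mem_image_of_mem Prod.fst hp)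
    · -- projective
      let σ : D.M i →ₗ[R] ({p // p ∈ S i} → R) :=
        { toFun := fun x p => ε i (p.1.2 ⊗ₜ[R] x)
          map_add' := by intro x y; funext p; simp [TensorProduct.tmul_add]
          map_smul' := by intro c x; funext p; simp [TensorProduct.tmul_smul] }
      let π : ({p // p ∈ S i} → R) →ₗ[R] D.M i :=
        { toFun := fun w => ∑ p : {p // p ∈ S i}, w p • p.1.1
          map_add' := by intro w w'; simp [add_smul, Finset.sum_add_distrib]
          map_smul' := by intro c w; simp [mul_smul, Finset.smul_sum] }
      refine Module.Projective.of_split σ π ?_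
      refine LinearMap.ext fun x => ?_
      have hπσ : π (σ x) = x := by
        show (∑ p : {p // p ∈ S i}, ε i (p.1.2 ⊗ₜ[R] x) • p.1.1) = x
        rw [Finset.sum_coe_sort (S i) (fun p => ε i (p.2 ⊗ₜ[R] x) • p.1)]
        exact hdb i x
      simpa [π, σ] using hπσ
    · intro i j a
      have hη1 : η j 1 = ∑ p ∈ S i, (D.map a) p.1 ⊗ₜ[R] (E.map a) p.2 := by
        rw [← hη i j a]
        simp [LinearMap.comp_apply, hS i, map_sum]
      have hRight : ∀ y, ∑ p ∈ S i, ε j ((E.map a) p.2 ⊗ₜ[R] y) • (D.map a) p.1 = y :=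
        aux_triangle1 (η j) (ε j) (ht1 j) (S i)
          (fun p => D.map a p.1) (fun p => E.map a p.2) hη1
      have hεa : ∀ (m : E.M i) (x : D.M i),
          ε j ((E.map a) m ⊗ₜ[R] (D.map a) x) = ε i (m ⊗ₜ[R] x) := fun m x => by
        simpa using LinearMap.congr_fun (hε i j a) (m ⊗ₜ[R] x)
      constructor
      · intro x y hxy
        rw [← hdb i x, ← hdb i y]
        refine Finset.sum_congr rfl fun p _ => ?_
        rw [← hεa p.2 x, ← hεa p.2 y, hxy]
      · intro y
        refine ⟨∑ p ∈ S i, ε j ((E.map a) p.2 ⊗ₜ[R] y) • p.1, ?_⟩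
        rw [map_sum]
        simp only [map_smul]
        exact hRight y
  · rintro ⟨hfp, hbij⟩
    have hfin : ∀ i, Module.Finite R (D.M i) := fun i => (hfp i).1
    have hproj : ∀ i, Module.Projective R (D.M i) := fun i => (hfp i).2
    have hdbex : ∀ i : V, ∃ (n : ℕ) (d : Fin n → D.M i) (f : Fin n → (D.M i →ₗ[R] R)),
        ∀ x, ∑ k, f k x • d k = x := fun i =>
      haveI := hfin i; haveI := hproj i; aux_exists_dualBasis
    choose n d f hdf using hdbex
    refine ⟨{ M := fun i => Module.Dual R (D.M i)
              map := fun {i j} a =>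
                (LinearEquiv.ofBijective (D.map a) (hbij i j a)).symm.toLinearMap.dualMap },
      fun i => LinearMap.toSpanSingleton R _ (∑ k, d i k ⊗ₜ[R] f i k),
      fun i => contractLeft R (D.M i), ?_, ?_, ?_, ?_⟩
    · intro i j a
      apply LinearMap.ext_ring
      simp only [LinearMap.comp_apply, LinearMap.toSpanSingleton_apply, one_smul,
        map_sum, TensorProduct.map_tmul]
      refine aux_dual_sum_eq _ _ (d j) (f j) ?_ (hdf j)
      intro y
      have h1 : ∀ k, ((LinearEquiv.ofBijective (D.map a) (hbij i j a)).symm.toLinearMap.dualMap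
          (f i k)) y = f i k ((LinearEquiv.ofBijective (D.map a) (hbij i j a)).symm y) :=
        fun k => rfl
      simp only [h1]
      have h2 := congrArg (D.map a)
        (hdf i ((LinearEquiv.ofBijective (D.map a) (hbij i j a)).symm y))
      rw [map_sum] at h2
      simp only [map_smul] at h2
      rw [h2]
      exact (LinearEquiv.ofBijective (D.map a) (hbij i j a)).apply_symm_apply y
    · intro i j a
      apply TensorProduct.ext'
      intro g x
      simp only [LinearMap.comp_apply, TensorProduct.map_tmul, contractLeft_apply]
      show g ((LinearEquiv.ofBijective (D.map a) (hbij i j a)).symm (D.map a x)) = g x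
      congr 1
      exact (LinearEquiv.ofBijective (D.map a) (hbij i j a)).symm_apply_apply x
    · intro i
      ext x
      simp only [LinearMap.comp_apply, LinearEquiv.coe_coe, TensorProduct.lid_symm_apply,
        LinearMap.rTensor_tmul, LinearMap.toSpanSingleton_apply, one_smul,
        TensorProduct.sum_tmul, map_sum, TensorProduct.assoc_tmul, LinearMap.lTensor_tmul,
        contractLeft_apply, TensorProduct.rid_tmul, LinearMap.id_apply]
      exact hdf i x
    · intro i
      refine LinearMap.ext fun g => ?_
      simp only [LinearMap.comp_apply, LinearEquiv.coe_coe, TensorProduct.rid_symm_apply,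
        LinearMap.lTensor_tmul, LinearMap.toSpanSingleton_apply, one_smul,
        TensorProduct.tmul_sum, map_sum, TensorProduct.assoc_symm_tmul,
        LinearMap.rTensor_tmul, contractLeft_apply, TensorProduct.lid_tmul,
        LinearMap.id_apply]
      exact aux_dual_apply (d i) (f i) (hdf i) g
end

section
/- Let $A$ be a bounded non-positive dg ring. Then $A$ is right dg noetherian (every ascending chain of right dg ideals stabilizes) if and only if $A^0$ is a right noetherian ring and $A^n$ is a finitely generated right $A^0$-module for every $n$. -/
universe u

open DirectSum

variable {A : Type u} [Ring A] (𝒜 : ℤ → AddSubgroup A) [GradedRing 𝒜] (d : A →+ A)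

/-- A right dg ideal of a dg ring: a right ideal which is graded (contains all homogeneous
components of its elements) and closed under the differential. -/
def IsRightDgIdeal (I : AddSubgroup A) : Prop :=
  (∀ x ∈ I, ∀ a : A, x * a ∈ I) ∧
  (∀ x ∈ I, d x ∈ I) ∧
  (∀ x ∈ I, ∀ i : ℤ, ((DirectSum.decompose 𝒜 x i : 𝒜 i) : A) ∈ I)

/-- A dg ring is right dg noetherian if every ascending chain of right dg ideals
stabilizes. -/
def RightDgNoetherian : Prop :=
  ∀ f : ℕ → AddSubgroup A, Monotone f → (∀ n, IsRightDgIdeal 𝒜 d (f n)) →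
    ∃ n, ∀ m, n ≤ m → f m = f n

/-- The degree `n` part `𝒜 n` of a graded ring as a right module over the degree zero
part `𝒜 0` (i.e. a left module over the opposite ring), with action `x • a = x * a`. -/
noncomputable def gradeModule (n : ℤ) : Module (↥(𝒜 0))ᵐᵒᵖ ↥(𝒜 n) :=
  letI : SMul (↥(𝒜 0))ᵐᵒᵖ ↥(𝒜 n) :=
    ⟨fun r x => ⟨(x : A) * ((r.unop : ↥(𝒜 0)) : A), by
      simpa using SetLike.mul_mem_graded x.2 r.unop.2⟩⟩
  Module.ofMinimalAxioms
    (fun r x y => Subtype.ext (add_mul (x : A) (y : A) _))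
    (fun r s x => Subtype.ext (mul_add (x : A) _ _))
    (fun r s x => Subtype.ext (mul_assoc (x : A) _ _).symm)
    (fun x => Subtype.ext (mul_one (x : A)))

/-!
A right `A⁰`-submodule `W` of the degree `n` cocycles generates the right dg ideal `W·A`, whose
degree `n` part is `W` again, so the ascending chain condition on right dg ideals gives it on
such `W`. Since `A¹ = 0`, every element of `A⁰` is a cocycle, so `A⁰` is right noetherian; and
as `d` is right `A⁰`-linear, `0 → Zⁿ → Aⁿ → Aⁿ⁺¹` shows by descending induction from `A¹ = 0`
that every `Aⁿ` is finitely generated. Conversely, a right dg ideal is graded, hence determined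
by its finitely many components `I ∩ Aⁿ`, which are submodules of noetherian `A⁰`-modules.
-/

theorem Module.Finite.of_isNoetherian_ker {R M N : Type*} [Ring R] [AddCommGroup M] [Module R M]
    [AddCommGroup N] [Module R N] [IsNoetherian R N] (f : M →ₗ[R] N)
    [IsNoetherian R (LinearMap.ker f)] : Module.Finite R M := by
  refine ⟨Submodule.fg_of_fg_map_of_fg_inf_ker f (IsNoetherian.noetherian _) ?_⟩
  rw [top_inf_eq]
  exact isNoetherian_submodule.1 ‹_› _ le_rfl

noncomputable instance (n : ℤ) : Module (↥(𝒜 0))ᵐᵒᵖ ↥(𝒜 n) := gradeModule 𝒜 n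

theorem AddSubgroup.subsingleton_of_eq_bot {H : AddSubgroup A} (h : H = ⊥) : Subsingleton H := by
  rw [h]
  infer_instance

theorem mul_mem_span_op {S : Set A} {z : A} (hz : z ∈ S) (a : A) :
    z * a ∈ Submodule.span Aᵐᵒᵖ S := by
  simpa using Submodule.smul_mem _ (MulOpposite.op a) (Submodule.subset_span hz)

theorem span_op_induction {S : Set A} {p : A → Prop} (zero : p 0)
    (add : ∀ x y, p x → p y → p (x + y)) (mul : ∀ z ∈ S, ∀ a, p (z * a)) {x : A}
    (hx : x ∈ Submodule.span Aᵐᵒᵖ S) : p x := by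
  -- Strengthened so that the `smul` case is just associativity.
  suffices ∀ a, p (x * a) by simpa using this 1
  induction hx using Submodule.span_induction with
  | mem z hz => exact mul z hz
  | zero => simpa using zero
  | add x y _ _ hx hy => exact fun a => by rw [add_mul]; exact add _ _ (hx a) (hy a)
  | smul r x _ hx => exact fun a => by rw [MulOpposite.smul_eq_mul_unop, mul_assoc]; exact hx _

theorem isRightDgIdeal_span_op
    (hleib : ∀ (i : ℤ) (a b : A), a ∈ 𝒜 i →
      d (a * b) = d a * b + ((((-1 : ℤˣ) ^ i : ℤˣ) : ℤ)) • (a * d b))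
    {n : ℤ} {S : Set A} (hS : ∀ z ∈ S, z ∈ 𝒜 n ∧ d z = 0) :
    IsRightDgIdeal 𝒜 d (Submodule.span Aᵐᵒᵖ S).toAddSubgroup := by
  refine ⟨fun x hx a => ?_, fun x hx => ?_, fun x hx i => ?_⟩
  · simpa using Submodule.smul_mem _ (MulOpposite.op a) hx
  · refine span_op_induction (p := fun x => d x ∈ Submodule.span Aᵐᵒᵖ S)
      (by simp) (fun x y hx hy => by simpa using add_mem hx hy) (fun z hz a => ?_) hx
    rw [hleib n z a (hS z hz).1, (hS z hz).2, zero_mul, zero_add]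
    exact zsmul_mem (mul_mem_span_op hz _) _
  · refine span_op_induction (p := fun x => (decompose 𝒜 x i : A) ∈ Submodule.span Aᵐᵒᵖ S)
      (by simp) (fun x y hx hy => by simpa using add_mem hx hy) (fun z hz a => ?_) hx
    have := coe_decompose_mul_add_of_left_mem 𝒜 (j := i - n) (b := a) (hS z hz).1
    rw [add_sub_cancel] at this
    rw [this]
    exact mul_mem_span_op hz _

theorem mem_of_coe_mem_span_op {n : ℤ} (W : Submodule (𝒜 0)ᵐᵒᵖ (𝒜 n)) {y : 𝒜 n}
    (hy : (y : A) ∈ Submodule.span Aᵐᵒᵖ (((↑) : 𝒜 n → A) '' W)) : y ∈ W := by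
  suffices decompose 𝒜 (y : A) n ∈ W by simpa using this
  refine span_op_induction (p := fun x => decompose 𝒜 x n ∈ W)
    (by simp) (fun x y hx hy => by simpa using add_mem hx hy) ?_ hy
  rintro _ ⟨z, hz, rfl⟩ a
  have : decompose 𝒜 ((z : A) * a) n = MulOpposite.op (decompose 𝒜 a 0) • z := by
    have h := coe_decompose_mul_add_of_left_mem 𝒜 (j := 0) (b := a) z.2
    rw [add_zero] at h
    exact Subtype.ext h
  rw [this]
  exact W.smul_mem _ hz

theorem span_op_coe_injective {n : ℤ} :
    Function.Injective fun W : Submodule (𝒜 0)ᵐᵒᵖ (𝒜 n) =>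
      Submodule.span Aᵐᵒᵖ (((↑) : 𝒜 n → A) '' W) := by
  intro W W' (h : Submodule.span Aᵐᵒᵖ _ = Submodule.span Aᵐᵒᵖ _)
  refine le_antisymm (fun y hy => ?_) (fun y hy => ?_)
  · exact mem_of_coe_mem_span_op 𝒜 W' (h ▸ Submodule.subset_span ⟨y, hy, rfl⟩)
  · exact mem_of_coe_mem_span_op 𝒜 W (h ▸ Submodule.subset_span ⟨y, hy, rfl⟩)

abbrev RightDgIdeal : Type u := {I : AddSubgroup A // IsRightDgIdeal 𝒜 d I}

theorem rightDgNoetherian_iff_wellFoundedGT :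
    RightDgNoetherian 𝒜 d ↔ WellFoundedGT (RightDgIdeal 𝒜 d) := by
  rw [wellFoundedGT_iff_monotone_chain_condition]
  constructor
  · intro h f
    obtain ⟨n, hn⟩ := h (fun k => (f k).1) (fun k l hkl => f.mono hkl) (fun k => (f k).2)
    exact ⟨n, fun m hm => Subtype.ext (hn m hm).symm⟩
  · intro h f hf hdg
    obtain ⟨n, hn⟩ := h ⟨fun k => ⟨f k, hdg k⟩, fun k l hkl => hf hkl⟩
    exact ⟨n, fun m hm => congrArg Subtype.val (hn m hm).symm⟩

namespace RightDgIdeal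

variable {𝒜 d}

def gradePart (I : RightDgIdeal 𝒜 d) (n : ℤ) : Submodule (𝒜 0)ᵐᵒᵖ (𝒜 n) where
  carrier := {y | (y : A) ∈ I.1}
  add_mem' := I.1.add_mem
  zero_mem' := zero_mem I.1
  smul_mem' _ _ hy := I.2.1 _ hy _

theorem le_of_forall_gradePart_le {I J : RightDgIdeal 𝒜 d}
    (h : ∀ n, I.gradePart n ≤ J.gradePart n) : I ≤ J := by
  classical
  intro x hx
  rw [← sum_support_decompose 𝒜 x]
  exact sum_mem fun n _ => h n (I.2.2.2 x hx n)

end RightDgIdeal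

theorem isNoetherian_of_forall_d_eq_zero
    (hleib : ∀ (i : ℤ) (a b : A), a ∈ 𝒜 i →
      d (a * b) = d a * b + ((((-1 : ℤˣ) ^ i : ℤˣ) : ℤ)) • (a * d b))
    (hN : RightDgNoetherian 𝒜 d) {n : ℤ} (Z : Submodule (𝒜 0)ᵐᵒᵖ (𝒜 n))
    (hZ : ∀ z ∈ Z, d z = 0) : IsNoetherian (𝒜 0)ᵐᵒᵖ Z := by
  have := (rightDgNoetherian_iff_wellFoundedGT 𝒜 d).1 hN
  rw [isNoetherian_iff']
  let gen : Submodule (𝒜 0)ᵐᵒᵖ Z → RightDgIdeal 𝒜 d := fun V =>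
    ⟨(Submodule.span Aᵐᵒᵖ (((↑) : 𝒜 n → A) '' V.map Z.subtype)).toAddSubgroup,
      isRightDgIdeal_span_op 𝒜 d hleib <| by
        rintro _ ⟨_, ⟨y, -, rfl⟩, rfl⟩
        exact ⟨y.1.2, hZ _ y.2⟩⟩
  have gen_mono : Monotone gen := fun V V' h =>
    Submodule.span_mono (Set.image_mono (Submodule.map_mono h))
  refine StrictMono.wellFoundedGT (gen_mono.strictMono_of_injective fun V V' h => ?_)
  exact Submodule.map_injective_of_injective Z.injective_subtype
    (span_op_coe_injective 𝒜 (Submodule.toAddSubgroup_injective (congrArg Subtype.val h)))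

theorem d_eq_zero_of_mem_zero {A : Type*} [Ring A] {𝒜 : ℤ → AddSubgroup A} {d : A →+ A}
    (hd1 : ∀ i : ℤ, ∀ a ∈ 𝒜 i, d a ∈ 𝒜 (i + 1))
    (hnonpos : ∀ i : ℤ, 0 < i → 𝒜 i = ⊥) {a : A} (ha : a ∈ 𝒜 0) : d a = 0 := by
  simpa [hnonpos 1 one_pos] using hd1 0 a ha

theorem d_mul_of_mem_zero {A : Type*} [Ring A] {𝒜 : ℤ → AddSubgroup A} {d : A →+ A}
    (hd1 : ∀ i : ℤ, ∀ a ∈ 𝒜 i, d a ∈ 𝒜 (i + 1))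
    (hleib : ∀ (i : ℤ) (a b : A), a ∈ 𝒜 i →
      d (a * b) = d a * b + ((((-1 : ℤˣ) ^ i : ℤˣ) : ℤ)) • (a * d b))
    (hnonpos : ∀ i : ℤ, 0 < i → 𝒜 i = ⊥) {n : ℤ} {x a : A} (hx : x ∈ 𝒜 n) (ha : a ∈ 𝒜 0) :
    d (x * a) = d x * a := by
  rw [hleib n x a hx, d_eq_zero_of_mem_zero hd1 hnonpos ha, mul_zero, smul_zero, add_zero]

def gradeDifferential (n : ℤ) (hd1 : ∀ a ∈ 𝒜 n, d a ∈ 𝒜 (n + 1))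
    (hlin : ∀ x ∈ 𝒜 n, ∀ a ∈ 𝒜 0, d (x * a) = d x * a) :
    𝒜 n →ₗ[(𝒜 0)ᵐᵒᵖ] 𝒜 (n + 1) where
  toFun x := ⟨d (x : A), hd1 x x.2⟩
  map_add' x y := Subtype.ext (map_add d (x : A) y)
  map_smul' r x := Subtype.ext (hlin x x.2 r.unop r.unop.2)

theorem isNoetherianRing_of_rightDgNoetherian (hd1 : ∀ i : ℤ, ∀ a ∈ 𝒜 i, d a ∈ 𝒜 (i + 1))
    (hleib : ∀ (i : ℤ) (a b : A), a ∈ 𝒜 i →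
      d (a * b) = d a * b + ((((-1 : ℤˣ) ^ i : ℤˣ) : ℤ)) • (a * d b))
    (hnonpos : ∀ i : ℤ, 0 < i → 𝒜 i = ⊥) (hN : RightDgNoetherian 𝒜 d) :
    IsNoetherianRing (𝒜 0)ᵐᵒᵖ := by
  have : IsNoetherian (𝒜 0)ᵐᵒᵖ (𝒜 0) := isNoetherian_top_iff.1 <|
    isNoetherian_of_forall_d_eq_zero 𝒜 d hleib hN ⊤ fun z _ =>
      d_eq_zero_of_mem_zero hd1 hnonpos z.2
  exact isNoetherian_of_linearEquiv (MulOpposite.opLinearEquiv (𝒜 0)ᵐᵒᵖ)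

theorem finite_grade_of_rightDgNoetherian (hd1 : ∀ i : ℤ, ∀ a ∈ 𝒜 i, d a ∈ 𝒜 (i + 1))
    (hleib : ∀ (i : ℤ) (a b : A), a ∈ 𝒜 i →
      d (a * b) = d a * b + ((((-1 : ℤˣ) ^ i : ℤˣ) : ℤ)) • (a * d b))
    (hnonpos : ∀ i : ℤ, 0 < i → 𝒜 i = ⊥) (hN : RightDgNoetherian 𝒜 d) (n : ℤ) :
    Module.Finite (𝒜 0)ᵐᵒᵖ (𝒜 n) := by
  have := isNoetherianRing_of_rightDgNoetherian 𝒜 d hd1 hleib hnonpos hN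
  have finite_pred (n : ℤ) (hn : Module.Finite (𝒜 0)ᵐᵒᵖ (𝒜 n)) :
      Module.Finite (𝒜 0)ᵐᵒᵖ (𝒜 (n - 1)) := by
    rw [← sub_add_cancel n 1] at hn
    let δ := gradeDifferential 𝒜 d (n - 1) (hd1 _) fun x hx a ha =>
      d_mul_of_mem_zero hd1 hleib hnonpos hx ha
    have : IsNoetherian (𝒜 0)ᵐᵒᵖ (LinearMap.ker δ) :=
      isNoetherian_of_forall_d_eq_zero 𝒜 d hleib hN _ fun z hz => congrArg Subtype.val hz
    exact Module.Finite.of_isNoetherian_ker δ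
  have finite_of_pos (i : ℤ) (hi : 0 < i) : Module.Finite (𝒜 0)ᵐᵒᵖ (𝒜 i) :=
    have := AddSubgroup.subsingleton_of_eq_bot (hnonpos i hi)
    inferInstance
  obtain hn | hpos := le_or_gt n 1
  · induction n, hn using Int.leInductionDown with
    | base => exact finite_of_pos 1 one_pos
    | pred n _ ih => exact finite_pred n ih
  · exact finite_of_pos n (one_pos.trans hpos)

theorem rightDgNoetherian_of_finite (hnonpos : ∀ i : ℤ, 0 < i → 𝒜 i = ⊥)
    (hbdd : ∃ N : ℤ, ∀ i : ℤ, i < N → 𝒜 i = ⊥) [IsNoetherianRing (𝒜 0)ᵐᵒᵖ]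
    [∀ n, Module.Finite (𝒜 0)ᵐᵒᵖ (𝒜 n)] : RightDgNoetherian 𝒜 d := by
  obtain ⟨N, hbelow⟩ := hbdd
  have le_of_gradePart_le {I J : RightDgIdeal 𝒜 d}
      (h : ∀ i : Set.Icc N 0, I.gradePart i ≤ J.gradePart i) : I ≤ J := by
    refine RightDgIdeal.le_of_forall_gradePart_le fun i => ?_
    by_cases hi : i ∈ Set.Icc N 0
    · exact h ⟨i, hi⟩
    · rw [Set.mem_Icc, not_and_or, not_le, not_le] at hi
      have := AddSubgroup.subsingleton_of_eq_bot (hi.elim (hbelow i) (hnonpos i))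
      have := Submodule.subsingleton_iff (𝒜 0)ᵐᵒᵖ |>.2 this
      exact (Subsingleton.elim _ _).le
  have : WellFoundedGT (∀ i : Set.Icc N 0, Submodule (𝒜 0)ᵐᵒᵖ (𝒜 i)) :=
    Pi.wellFoundedLT (α := fun i : Set.Icc N 0 => (Submodule (𝒜 0)ᵐᵒᵖ (𝒜 i))ᵒᵈ)
  rw [rightDgNoetherian_iff_wellFoundedGT]
  refine StrictMono.wellFoundedGT
    (f := fun (I : RightDgIdeal 𝒜 d) (i : Set.Icc N 0) => I.gradePart i) ?_
  refine Monotone.strictMono_of_injective (fun I J h i y hy => h hy) fun I J h => ?_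
  exact le_antisymm (le_of_gradePart_le fun i => (congrFun h i).le)
    (le_of_gradePart_le fun i => (congrFun h i).ge)

theorem statement12_general {A : Type u} [Ring A] (𝒜 : ℤ → AddSubgroup A) [GradedRing 𝒜]
    (d : A →+ A)
    (hd1 : ∀ i : ℤ, ∀ a ∈ 𝒜 i, d a ∈ 𝒜 (i + 1))
    (hleib : ∀ (i : ℤ) (a b : A), a ∈ 𝒜 i →
      d (a * b) = d a * b + ((((-1 : ℤˣ) ^ i : ℤˣ) : ℤ)) • (a * d b))
    (hnonpos : ∀ i : ℤ, 0 < i → 𝒜 i = ⊥)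
    (hbdd : ∃ N : ℤ, ∀ i : ℤ, i < N → 𝒜 i = ⊥) :
    RightDgNoetherian 𝒜 d ↔
      (IsNoetherianRing (↥(𝒜 0))ᵐᵒᵖ ∧
        ∀ n : ℤ, letI := gradeModule 𝒜 n; Module.Finite (↥(𝒜 0))ᵐᵒᵖ ↥(𝒜 n)) := by
  refine ⟨fun hN => ⟨?_, ?_⟩, fun ⟨_, hF⟩ => ?_⟩
  · exact isNoetherianRing_of_rightDgNoetherian 𝒜 d hd1 hleib hnonpos hN
  · exact finite_grade_of_rightDgNoetherian 𝒜 d hd1 hleib hnonpos hN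
  · have : ∀ n, Module.Finite (𝒜 0)ᵐᵒᵖ (𝒜 n) := hF
    exact rightDgNoetherian_of_finite 𝒜 d hnonpos hbdd

/-- Let `A` be a bounded non-positive dg ring (a `ℤ`-graded ring with a
degree `+1` differential `d` satisfying `d² = 0` and the graded Leibniz rule, with `𝒜 i = 0`
for `i > 0` and for `i ≪ 0`).  Then `A` is right dg noetherian (the ascending chain
condition for right dg ideals) if and only if `𝒜 0` is a right noetherian ring and each
`𝒜 n` is a finitely generated right `𝒜 0`-module. -/
theorem statement12 {A : Type u} [Ring A] (𝒜 : ℤ → AddSubgroup A) [GradedRing 𝒜]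
    (d : A →+ A)
    (hd1 : ∀ i : ℤ, ∀ a ∈ 𝒜 i, d a ∈ 𝒜 (i + 1))
    (hd2 : ∀ a : A, d (d a) = 0)
    (hleib : ∀ (i : ℤ) (a b : A), a ∈ 𝒜 i →
      d (a * b) = d a * b + ((((-1 : ℤˣ) ^ i : ℤˣ) : ℤ)) • (a * d b))
    (hnonpos : ∀ i : ℤ, 0 < i → 𝒜 i = ⊥)
    (hbdd : ∃ N : ℤ, ∀ i : ℤ, i < N → 𝒜 i = ⊥) :
    RightDgNoetherian 𝒜 d ↔
      (IsNoetherianRing (↥(𝒜 0))ᵐᵒᵖ ∧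
        ∀ n : ℤ, letI := gradeModule 𝒜 n; Module.Finite (↥(𝒜 0))ᵐᵒᵖ ↥(𝒜 n)) :=
  statement12_general 𝒜 d hd1 hleib hnonpos hbdd
end

section
/- Let $R$ be a commutative noetherian ring, $\mathcal{X}$ a torsion-free class of finitely generated $R$-modules, and $\mathfrak{p}$ a prime ideal such that $\mathfrak{p} \in \mathrm{Ass}(X)$ for some $X \in \mathcal{X}$. Then every finitely generated $R$-module $M$ with $\mathrm{Ass}(M) = \{\mathfrak{p}\}$ belongs to $\mathcal{X}$. -/
universe u

variable {R : Type u} [CommRing R]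

/-!
Since `𝔭 ∈ Ass X`, `R ⧸ 𝔭` embeds in `X` and so lies in the class. As `Ass M = {𝔭}`, elements
outside `𝔭` act injectively on `M` and `𝔭 ⊆ √(Ann M)`; together these force `𝔭 ∈ Ass (M ⧸ N)`
for every proper `𝔭`-saturated submodule `N`. Choose a copy of `R ⧸ 𝔭` in `M ⧸ N`: its
`𝔭`-saturation `K` is finitely generated, so a single `t ∉ 𝔭` embeds `K` into `R ⧸ 𝔭`, and `K`
is in the class. The quotient `(M ⧸ N) ⧸ K` is `M ⧸ N'` with `N < N'` again saturated, so
noetherian induction on `N` and closure under extensions give `M = M ⧸ ⊥` in the class.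
-/

namespace Submodule

variable {M : Type*} [AddCommGroup M] [Module R M]

/-- The kernel of `M → (M ⧸ N)_p`. -/
def saturation (N : Submodule R M) (p : Ideal R) [p.IsPrime] : Submodule R M :=
  (torsion' R (M ⧸ N) p.primeCompl).comap N.mkQ

variable {N : Submodule R M} {p : Ideal R} [p.IsPrime]

theorem mem_saturation {x : M} : x ∈ N.saturation p ↔ ∃ s ∉ p, s • x ∈ N := by
  simp only [saturation, mem_comap, mkQ_apply, mem_torsion'_iff, ← Quotient.mk_smul,
    Quotient.mk_eq_zero, Subtype.exists, Submonoid.mk_smul, exists_prop]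
  rfl

theorem le_saturation : N ≤ N.saturation p := fun x hx =>
  mem_saturation.mpr ⟨1, p.primeCompl.one_mem, by rwa [one_smul]⟩

theorem mem_saturation_of_smul_mem {s : R} (hs : s ∉ p) {x : M} (h : s • x ∈ N.saturation p) :
    x ∈ N.saturation p := by
  obtain ⟨t, ht, htx⟩ := mem_saturation.mp h
  exact mem_saturation.mpr ⟨t * s, p.primeCompl.mul_mem ht hs, by rwa [mul_smul]⟩

variable (N p)

theorem exists_smul_mem_of_mem_saturation [IsNoetherianRing R] [Module.Finite R M] :
    ∃ t ∉ p, ∀ x ∈ N.saturation p, t • x ∈ N := by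
  set T := torsion' R (M ⧸ N) p.primeCompl
  have hsupp : (⟨p, inferInstance⟩ : PrimeSpectrum R) ∉ Module.support R T :=
    Module.notMem_support_iff'.mpr fun m => by
      obtain ⟨⟨r, hr⟩, hrm⟩ := (mem_torsion'_iff _ _).mp m.2
      exact ⟨r, hr, Subtype.ext hrm⟩
  obtain ⟨t, htT, htp⟩ :=
    SetLike.not_le_iff_exists.mp (Module.mem_support_iff_of_finite.not.mp hsupp)
  refine ⟨t, htp, fun x hx => ?_⟩
  have := congrArg Subtype.val (Module.mem_annihilator.mp htT ⟨N.mkQ x, hx⟩)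
  simpa [← Quotient.mk_smul] using this

end Submodule

section AssociatedPrimes

variable [IsNoetherianRing R] {M : Type*} [AddCommGroup M] [Module R M]

theorem isSMulRegular_of_forall_notMem_associatedPrimes {s : R}
    (hs : ∀ q ∈ associatedPrimes R M, s ∉ q) : IsSMulRegular M s := by
  refine IsSMulRegular.of_right_eq_zero_of_smul fun x hsx => ?_
  by_contra hx
  have : s ∈ ⋃ q ∈ associatedPrimes R M, (q : Set R) := by
    rw [biUnion_associatedPrimes_eq_zero_divisors]
    exact ⟨x, hx, hsx⟩
  obtain ⟨q, hq, hsq⟩ := Set.mem_iUnion₂.mp this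
  exact hs q hq hsq

variable (R M) in
theorem sInf_associatedPrimes_le_radical_annihilator [Module.Finite R M] :
    sInf (associatedPrimes R M) ≤ (Module.annihilator R M).radical := by
  rw [← Ideal.sInf_minimalPrimes]
  exact sInf_le_sInf
    (Module.associatedPrimes.minimalPrimes_annihilator_subset_associatedPrimes R M)

theorem mem_associatedPrimes_of_isSMulRegular [Nontrivial M] {p : Ideal R}
    (hreg : ∀ s ∉ p, IsSMulRegular M s) (hrad : p ≤ (Module.annihilator R M).radical) :
    p ∈ associatedPrimes R M := by
  obtain ⟨q, hq⟩ := associatedPrimes.nonempty R M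
  suffices q = p from this ▸ hq
  obtain ⟨hqprime, x, rfl⟩ := isAssociatedPrime_iff.mp hq
  refine le_antisymm (fun r hr => ?_) ?_
  · by_contra hrp
    have hx : x = 0 := (hreg r hrp).right_eq_zero_of_smul (by simpa using hr)
    exact hqprime.ne_top (by simp [hx])
  · have hann := hq.annihilator_le
    rw [Submodule.annihilator_top] at hann
    exact hrad.trans (hqprime.radical_le_iff.mpr hann)

end AssociatedPrimes

namespace ModClass

variable [IsNoetherianRing R] {P : ModClass R}

theorem of_injective (hiso : IsoClosed P) (hsub : SubClosed P)
    {Y Z : Type u} [AddCommGroup Y] [Module R Y] [Module.Finite R Y] [AddCommGroup Z] [Module R Z]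
    (hY : P Y) (f : Z →ₗ[R] Y) (hf : Function.Injective f) : P Z :=
  hiso _ _ inferInstance (LinearEquiv.ofInjective f hf).symm (hsub Y inferInstance hY _)

theorem of_subsingleton (hiso : IsoClosed P) (hsub : SubClosed P)
    {Y : Type u} [AddCommGroup Y] [Module R Y] [Module.Finite R Y] (hY : P Y)
    (Z : Type u) [AddCommGroup Z] [Module R Z] [Subsingleton Z] : P Z :=
  of_injective hiso hsub hY 0 (Function.injective_of_subsingleton _)

variable {p : Ideal R} [p.IsPrime]

/-- Some `t ∉ p` maps the saturation of `R ⧸ p ↪ Q` injectively into `R ⧸ p`. -/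
theorem saturation_range_mem (hiso : IsoClosed P) (hsub : SubClosed P) (hp : P (R ⧸ p))
    {Q : Type u} [AddCommGroup Q] [Module R Q] [Module.Finite R Q]
    (hreg : ∀ s ∉ p, IsSMulRegular Q s) (f : R ⧸ p →ₗ[R] Q) (hf : Function.Injective f) :
    P ((LinearMap.range f).saturation p) := by
  obtain ⟨t, htp, ht⟩ := (LinearMap.range f).exists_smul_mem_of_mem_saturation p
  let smul_t := LinearMap.codRestrict (LinearMap.range f)
    (LinearMap.lsmul R Q t ∘ₗ ((LinearMap.range f).saturation p).subtype) fun x => ht x x.2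
  have hsmul_t : Function.Injective smul_t := fun x y hxy =>
    Subtype.ext (hreg t htp (congrArg Subtype.val hxy))
  let e := (LinearEquiv.ofInjective f hf).symm
  exact of_injective hiso hsub hp (e.toLinearMap ∘ₗ smul_t) (e.injective.comp hsmul_t)

theorem quotient_mem_of_isSMulRegular (hiso : IsoClosed P) (hsub : SubClosed P)
    (hext : ExtClosed P) (hp : P (R ⧸ p))
    {M : Type u} [AddCommGroup M] [Module R M] [Module.Finite R M]
    (hrad : p ≤ (Module.annihilator R M).radical) (N : Submodule R M)
    (hN : ∀ s ∉ p, IsSMulRegular (M ⧸ N) s) : P (M ⧸ N) := by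
  induction N using WellFoundedGT.induction with
  | _ N ih =>
  rcases subsingleton_or_nontrivial (M ⧸ N) with hQ | hQ
  · exact of_subsingleton hiso hsub hp _
  have hpN : p ∈ associatedPrimes R (M ⧸ N) := mem_associatedPrimes_of_isSMulRegular hN
    (hrad.trans (Ideal.radical_mono (LinearMap.annihilator_le_of_surjective _ N.mkQ_surjective)))
  obtain ⟨-, f, hf⟩ := (isAssociatedPrime_iff_exists_injective_linearMap _ _).mp hpN
  set K := (LinearMap.range f).saturation p
  set N' := K.comap N.mkQ
  have hNN' : N ≤ N' := fun x hx => by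
    simp [N', (Submodule.Quotient.mk_eq_zero N).mpr hx]
  have hK : N'.map N.mkQ = K := Submodule.map_comap_eq_of_surjective N.mkQ_surjective K
  have hNlt : N < N' := by
    refine lt_of_le_of_ne hNN' fun hNN'' => ?_
    have hKbot : K = ⊥ := by rw [← hK, ← hNN'', Submodule.mkQ_map_self]
    have : f 1 ∈ K := Submodule.le_saturation (LinearMap.mem_range_self f 1)
    rw [hKbot, Submodule.mem_bot, ← map_zero f] at this
    exact one_ne_zero (hf this)
  have hN' : ∀ s ∉ p, IsSMulRegular (M ⧸ N') s := by
    refine fun s hs => IsSMulRegular.of_right_eq_zero_of_smul fun x hsx => ?_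
    obtain ⟨x, rfl⟩ := N'.mkQ_surjective x
    rw [← map_smul, Submodule.mkQ_apply, Submodule.Quotient.mk_eq_zero, Submodule.mem_comap,
      map_smul] at hsx
    exact (Submodule.Quotient.mk_eq_zero _).mpr (Submodule.mem_saturation_of_smul_mem hs hsx)
  refine hext K (M ⧸ N) (M ⧸ N') inferInstance inferInstance inferInstance K.subtype
    (Submodule.factor hNN') K.injective_subtype (Submodule.factor_surjective hNN') ?_
    (saturation_range_mem hiso hsub hp hN f hf) (ih N' hNlt hN')
  rw [Submodule.range_subtype, Submodule.ker_mapQ, Submodule.comap_id, hK]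

end ModClass

/-- Let `R` be a commutative noetherian ring, `𝒳` a torsion-free class of
finitely generated `R`-modules, and `𝔭` a prime ideal with `𝔭 ∈ Ass(X)` for some `X ∈ 𝒳`.
Then every finitely generated `R`-module `M` with `Ass(M) = {𝔭}` belongs to `𝒳`. -/
theorem statement15 {R : Type u} [CommRing R] [IsNoetherianRing R]
    (P : ModClass R) (hclass : IsoClosed P ∧ SubClosed P ∧ ExtClosed P)
    (𝔭 : Ideal R) (h𝔭 : 𝔭.IsPrime)
    (X : Type u) [AddCommGroup X] [Module R X] [Module.Finite R X]
    (hX : P X) (h𝔭X : 𝔭 ∈ associatedPrimes R X)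
    (M : Type u) [AddCommGroup M] [Module R M] [Module.Finite R M]
    (hM : associatedPrimes R M = {𝔭}) :
    P M := by
  obtain ⟨hiso, hsub, hext⟩ := hclass
  obtain ⟨-, g, hg⟩ := (isAssociatedPrime_iff_exists_injective_linearMap _ _).mp h𝔭X
  have hp : P (R ⧸ 𝔭) := ModClass.of_injective hiso hsub hX g hg
  have hreg : ∀ s ∉ 𝔭, IsSMulRegular M s := fun s hs =>
    isSMulRegular_of_forall_notMem_associatedPrimes (by simpa [hM] using hs)
  have hrad : 𝔭 ≤ (Module.annihilator R M).radical := by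
    simpa [hM] using sInf_associatedPrimes_le_radical_annihilator R M
  let e := Submodule.quotEquivOfEqBot (⊥ : Submodule R M) rfl
  have hreg_bot : ∀ s ∉ 𝔭, IsSMulRegular (M ⧸ (⊥ : Submodule R M)) s := fun s hs =>
    (e.toEquiv.isSMulRegular_congr (e.map_smul s)).mpr (hreg s hs)
  exact hiso _ _ inferInstance e
    (ModClass.quotient_mem_of_isSMulRegular hiso hsub hext hp hrad ⊥ hreg_bot)
end
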